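/- arXiv:2207.00832 — 2 statements merged into one kernel-verified Lean document; each statement's English description precedes it below -/
import Mathlib

section
/- For the single-substitution error ball B^S the following hold: (a) there exist real constants c1, c2 and an even integer n0 such that for every even n ≥ n0 and each N ∈ {1,2}, (3/2)·log2 n + c1 ≤ ρ_b(n,N;B^S) ≤ (3/2)·log2 n + c2; (b) for every integer N ≥ 3 and every even n ≥ 2, ρ_b(n,N;B^S) = Δ = n − log2 C(n, n/2). -/
namespace BRC

/-- Hamming distance between two binary words (of the same length). -/
def hammingDist (x y : List Bool) : ℕ :=
  (List.zip x y).countP (fun p => p.1 != p.2)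

/-- `balanced n` is the set `U_n` of binary words of length `n` with exactly `n/2` ones. -/
def balanced (n : ℕ) : Set (List Bool) :=
  {x | x.length = n ∧ x.count true = n / 2}

/-- `B^S(x)`: words obtained from `x` by at most one substitution. -/
def BS (x : List Bool) : Set (List Bool) :=
  {y | y.length = x.length ∧ hammingDist x y ≤ 1}

/-- `B^D(x)`: words obtained from `x` by deleting one symbol. -/
def BD (x : List Bool) : Set (List Bool) :=
  {y | ∃ (u v : List Bool) (b : Bool), x = u ++ b :: v ∧ y = u ++ v}

/-- `B^I(x)`: words obtained from `x` by inserting one symbol. -/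
def BI (x : List Bool) : Set (List Bool) :=
  {y | ∃ (u v : List Bool) (b : Bool), x = u ++ v ∧ y = u ++ b :: v}

def BDI (x : List Bool) : Set (List Bool) := BD x ∪ BI x
def BSD (x : List Bool) : Set (List Bool) := BS x ∪ BD x
def BSI (x : List Bool) : Set (List Bool) := BS x ∪ BI x
def Bedit (x : List Bool) : Set (List Bool) := BS x ∪ BD x ∪ BI x

/-- `C` is a balanced `(n,N;B)`-reconstruction code: `C ⊆ U_n` and `ν(C;B) < N`. -/
def reconCode (n N : ℕ) (B : List Bool → Set (List Bool)) (C : Set (List Bool)) : Prop :=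
  C ⊆ balanced n ∧ ∀ x ∈ C, ∀ y ∈ C, x ≠ y → (B x ∩ B y).ncard < N

/-- `ρ_b(n,N;B)`: optimal redundancy of a balanced `(n,N;B)`-reconstruction code. -/
noncomputable def rho (n N : ℕ) (B : List Bool → Set (List Bool)) : ℝ :=
  sInf {r : ℝ | ∃ C : Set (List Bool),
    reconCode n N B C ∧ r = (n : ℝ) - Real.logb 2 (C.ncard : ℝ)}

/-- `(10)^m`. -/
def pat10 (m : ℕ) : List Bool := (List.replicate m [true, false]).flatten
/-- `(01)^m`. -/
def pat01 (m : ℕ) : List Bool := (List.replicate m [false, true]).flatten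

/-- Type-A-confusable with parameter `m`: `{c, c'} = {(10)^m, (01)^m}`. -/
def TypeAWith (m : ℕ) (x y : List Bool) : Prop :=
  ∃ u v : List Bool,
    (x = u ++ pat10 m ++ v ∧ y = u ++ pat01 m ++ v) ∨
    (x = u ++ pat01 m ++ v ∧ y = u ++ pat10 m ++ v)

/-- Type-A-confusable (with some `m ≥ 1`). -/
def TypeA (x y : List Bool) : Prop := ∃ m, 1 ≤ m ∧ TypeAWith m x y

/-- Type-B-confusable with parameter `m`:
`{c, c'} = {0 1^m, 1^m 0}` or `{c, c'} = {1 0^m, 0^m 1}`. -/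
def TypeBWith (m : ℕ) (x y : List Bool) : Prop :=
  ∃ u v : List Bool,
    ((x = u ++ (false :: List.replicate m true) ++ v ∧
        y = u ++ (List.replicate m true ++ [false]) ++ v) ∨
     (x = u ++ (List.replicate m true ++ [false]) ++ v ∧
        y = u ++ (false :: List.replicate m true) ++ v)) ∨
    ((x = u ++ (true :: List.replicate m false) ++ v ∧
        y = u ++ (List.replicate m false ++ [true]) ++ v) ∨
     (x = u ++ (List.replicate m false ++ [true]) ++ v ∧
        y = u ++ (true :: List.replicate m false) ++ v))

/-- Type-B-confusable (with some `m ≥ 2`). -/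
def TypeB (x y : List Bool) : Prop := ∃ m, 2 ≤ m ∧ TypeBWith m x y

/-- Number of runs of a binary word. -/
def numRuns (x : List Bool) : ℕ := (x.destutter (· ≠ ·)).length

/-- `V_{n-1}`: binary words of length `n-1` with Hamming weight `n/2` or `n/2 - 1`. -/
def Vset (n : ℕ) : Set (List Bool) :=
  {x | x.length = n - 1 ∧ (x.count true = n / 2 ∨ x.count true = n / 2 - 1)}

/-- VT weighted sum `Σ_{i=1}^n i·x_i` (positions indexed from 1). -/
def vtSum (x : List Bool) : ℕ :=
  ((x.zipIdx.map Prod.swap).map (fun p => if p.2 then p.1 + 1 else 0)).sum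

/-- The balanced Varshamov–Tenengolts code `BVT_a(n)`. -/
def BVT (n a : ℕ) : Set (List Bool) :=
  {x | x ∈ balanced n ∧ vtSum x ≡ a [MOD n + 1]}

/-- `R_2^b(n,1,m)`: balanced words of length `n` all of whose runs have length at most `m`. -/
def R1 (n m : ℕ) : Set (List Bool) :=
  {x | x ∈ balanced n ∧ ∀ b : Bool, ¬ (List.replicate (m + 1) b <:+: x)}

/-!
Two distinct words of equal length have either no common neighbour within one substitution or
exactly two. Hence for `N ≥ 3` all of `U_n` is a code, and `ρ_b = Δ`.

For `N ≤ 2` a code must have pairwise disjoint balls. Each ball has `n + 1` words, and the balls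
around balanced words lie in the three middle weight layers, so `(n + 1)|C| ≤ 3 C(n, n/2)`; with
`C(n, n/2)² ≍ 4ⁿ / n` this gives the lower bound. For the upper bound, two balanced words at
distance `2` differ by swapping a `0` and a `1` fewer than `n` positions apart, which changes the
Varshamov–Tenengolts sum by a nonzero amount smaller than `n + 1`. So every residue class of that
sum modulo `n + 1` has disjoint balls, and by pigeonhole one of them has at least
`C(n, n/2) / (n + 1)` words.
-/

section HammingDist

@[simp]
lemma hammingDist_nil_left (y : List Bool) : hammingDist [] y = 0 := rfl

@[simp]
lemma hammingDist_cons_cons (a b : Bool) (x y : List Bool) :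
    hammingDist (a :: x) (b :: y) = hammingDist x y + if a = b then 0 else 1 := by
  cases a <;> cases b <;> simp [hammingDist]

@[simp]
lemma hammingDist_self (x : List Bool) : hammingDist x x = 0 := by
  induction x <;> simp_all

lemma hammingDist_comm : ∀ x y : List Bool, hammingDist x y = hammingDist y x
  | [], y => by cases y <;> rfl
  | _ :: _, [] => rfl
  | a :: x, b :: y => by simp [hammingDist_comm x y, eq_comm]

lemma eq_of_hammingDist_eq_zero :
    ∀ {x y : List Bool}, x.length = y.length → hammingDist x y = 0 → x = y
  | [], [], _, _ => rfl
  | a :: x, b :: y, hl, h => by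
    simp only [hammingDist_cons_cons, Nat.add_eq_zero_iff, ite_eq_left_iff] at h
    have hab : a = b := by by_contra hab; simp [hab] at h
    rw [hab, eq_of_hammingDist_eq_zero (by simpa using hl) h.1]

lemma hammingDist_triangle : ∀ {x y z : List Bool}, x.length = y.length →
    y.length = z.length → hammingDist x z ≤ hammingDist x y + hammingDist y z
  | [], [], [], _, _ => le_rfl
  | a :: x, b :: y, c :: z, hxy, hyz => by
    have := hammingDist_triangle (x := x) (y := y) (z := z) (by simpa using hxy)
      (by simpa using hyz)
    cases a <;> cases b <;> cases c <;> simp <;> omega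

end HammingDist

section SubstitutionBall

lemma mem_BS_comm {x y : List Bool} : y ∈ BS x ↔ x ∈ BS y := by
  simp only [BS, Set.mem_ofPred_eq, hammingDist_comm x y, eq_comm]

@[simp]
lemma nil_mem_BS_iff {x : List Bool} : [] ∈ BS x ↔ x = [] := by
  simp +contextual [BS, eq_comm]

@[simp]
lemma cons_mem_BS_cons_iff {a c : Bool} {x w : List Bool} :
    c :: w ∈ BS (a :: x) ↔ (c = a ∧ w ∈ BS x) ∨ (c = !a ∧ w = x) := by
  simp only [BS, Set.mem_ofPred_eq, List.length_cons, Nat.add_right_cancel_iff,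
    hammingDist_cons_cons]
  constructor
  · rintro ⟨hl, hd⟩
    by_cases hca : a = c
    · exact .inl ⟨hca.symm, hl, by simpa [hca] using hd⟩
    · refine .inr ⟨by cases a <;> cases c <;> simp_all, ?_⟩
      exact (eq_of_hammingDist_eq_zero hl.symm (by simp [hca] at hd; omega)).symm
  · rintro (⟨rfl, hl, hd⟩ | ⟨rfl, rfl⟩) <;> simp_all

lemma BS_cons (a : Bool) (x : List Bool) :
    BS (a :: x) = List.cons a '' BS x ∪ {(!a) :: x} := by
  ext (_ | ⟨c, w⟩) <;> aesop

lemma BS_finite (x : List Bool) : (BS x).Finite :=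
  (List.finite_length_eq Bool x.length).subset fun _ hy => hy.1

lemma ncard_BS (x : List Bool) : (BS x).ncard = x.length + 1 := by
  induction x with
  | nil =>
    have : BS [] = {[]} := by ext (_ | _) <;> simp [BS]
    simp [this]
  | cons a x ih =>
    rw [BS_cons, Set.ncard_union_eq (by simp) ((BS_finite x).image _) (Set.finite_singleton _),
      Set.ncard_image_of_injective _ List.cons_injective, ih]
    simp

lemma BS_cons_inter_BS_cons {a : Bool} {x y : List Bool} (hxy : x ≠ y) :
    BS (a :: x) ∩ BS (a :: y) = List.cons a '' (BS x ∩ BS y) := by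
  ext (_ | ⟨c, w⟩) <;> aesop

open Classical in
lemma BS_cons_inter_BS_not_cons (a : Bool) (x y : List Bool) :
    BS (a :: x) ∩ BS ((!a) :: y) = if y ∈ BS x then {a :: y, (!a) :: x} else ∅ := by
  have := @mem_BS_comm x y
  ext (_ | ⟨c, w⟩)
  · split_ifs <;> simp
  · split_ifs <;> cases a <;> cases c <;> aesop

theorem ncard_BS_inter_BS_eq_zero_or_two :
    ∀ {x y : List Bool}, x.length = y.length → x ≠ y →
    (BS x ∩ BS y).ncard = 0 ∨ (BS x ∩ BS y).ncard = 2
  | [], [], _, hxy => (hxy rfl).elim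
  | a :: x, b :: y, hl, hxy => by
    by_cases hab : b = a
    · subst hab
      have hxy' : x ≠ y := by simpa using hxy
      rw [BS_cons_inter_BS_cons hxy', Set.ncard_image_of_injective _ List.cons_injective]
      exact ncard_BS_inter_BS_eq_zero_or_two (by simpa using hl) hxy'
    · obtain rfl : b = !a := by cases a <;> cases b <;> simp_all
      rw [BS_cons_inter_BS_not_cons]
      split_ifs
      · exact .inr (Set.ncard_pair (by simp))
      · exact .inl (Set.ncard_empty _)

end SubstitutionBall

section WordsOfWeight

def wordsOfWeight (n k : ℕ) : Set (List Bool) := {x | x.length = n ∧ x.count true = k}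

lemma wordsOfWeight_finite (n k : ℕ) : (wordsOfWeight n k).Finite :=
  (List.finite_length_eq Bool n).subset fun _ h => h.1

lemma wordsOfWeight_succ_zero (n : ℕ) :
    wordsOfWeight (n + 1) 0 = List.cons false '' wordsOfWeight n 0 := by
  ext (_ | ⟨_ | _, w⟩) <;> simp [wordsOfWeight]

lemma wordsOfWeight_succ_succ (n k : ℕ) :
    wordsOfWeight (n + 1) (k + 1) =
      List.cons false '' wordsOfWeight n (k + 1) ∪ List.cons true '' wordsOfWeight n k := by
  ext (_ | ⟨_ | _, w⟩) <;> simp [wordsOfWeight]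

lemma ncard_wordsOfWeight : ∀ n k : ℕ, (wordsOfWeight n k).ncard = n.choose k
  | 0, 0 => by
    rw [show wordsOfWeight 0 0 = {[]} by ext; simp +contextual [wordsOfWeight]]
    simp
  | 0, k + 1 => by
    rw [show wordsOfWeight 0 (k + 1) = ∅ by ext; simp +contextual [wordsOfWeight]]
    simp
  | n + 1, 0 => by
    rw [wordsOfWeight_succ_zero, Set.ncard_image_of_injective _ List.cons_injective,
      ncard_wordsOfWeight n 0, Nat.choose_zero_right, Nat.choose_zero_right]
  | n + 1, k + 1 => by
    rw [wordsOfWeight_succ_succ, Set.ncard_union_eq (by simp [Set.disjoint_left])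
      ((wordsOfWeight_finite _ _).image _) ((wordsOfWeight_finite _ _).image _),
      Set.ncard_image_of_injective _ List.cons_injective,
      Set.ncard_image_of_injective _ List.cons_injective,
      ncard_wordsOfWeight n (k + 1), ncard_wordsOfWeight n k, Nat.choose_succ_succ', add_comm]

lemma ncard_balanced (n : ℕ) : (balanced n).ncard = n.choose (n / 2) :=
  ncard_wordsOfWeight n (n / 2)

lemma balanced_finite (n : ℕ) : (balanced n).Finite := wordsOfWeight_finite n (n / 2)

lemma balanced_nonempty (n : ℕ) : (balanced n).Nonempty :=
  Set.nonempty_of_ncard_ne_zero <| by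
    rw [ncard_balanced]; exact (Nat.choose_pos (Nat.div_le_self n 2)).ne'

end WordsOfWeight

section VarshamovTenengolts

lemma vtSum_zipIdx (x : List Bool) (k : ℕ) :
    (((x.zipIdx k).map Prod.swap).map (fun p => if p.2 then p.1 + 1 else 0)).sum =
      vtSum x + k * x.count true := by
  induction x generalizing k with
  | nil => simp [vtSum]
  | cons a x ih =>
    rw [vtSum, List.zipIdx_cons, List.zipIdx_cons]
    simp only [List.map_cons, List.sum_cons, Prod.swap_prod_mk]
    rw [ih, ih]
    cases a <;> simp <;> ring

lemma vtSum_cons (a : Bool) (x : List Bool) :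
    vtSum (a :: x) = (a :: x).count true + vtSum x := by
  rw [vtSum, List.zipIdx_cons]
  simp only [List.map_cons, List.sum_cons, Prod.swap_prod_mk]
  rw [vtSum_zipIdx]
  cases a <;> simp <;> ring

lemma vtSum_sub_of_hammingDist_eq_one : ∀ {x y : List Bool}, x.length = y.length →
    hammingDist x y = 1 → ∃ k < x.length,
      ((x.count true : ℤ) - y.count true = 1 ∨ (x.count true : ℤ) - y.count true = -1) ∧
      (vtSum x : ℤ) - vtSum y = ((x.count true : ℤ) - y.count true) * (k + 1)
  | a :: x, b :: y, hl, hd => by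
    simp only [List.length_cons, Nat.add_right_cancel_iff] at hl
    simp only [hammingDist_cons_cons] at hd
    simp only [vtSum_cons, List.length_cons]
    by_cases hab : a = b
    · subst hab
      obtain ⟨k, hk, hsign, hsum⟩ := vtSum_sub_of_hammingDist_eq_one hl (by simpa using hd)
      have hw : ((a :: x).count true : ℤ) - (a :: y).count true =
          x.count true - y.count true := by
        simp only [List.count_cons]; push_cast; ring
      refine ⟨k + 1, by omega, by rwa [hw], ?_⟩
      push_cast
      linear_combination hsum - (k + 1 : ℤ) * hw
    · obtain rfl : x = y := eq_of_hammingDist_eq_zero hl (by simp [hab] at hd; omega)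
      refine ⟨0, by omega, ?_⟩
      cases a <;> cases b <;> simp_all

lemma vtSum_sub_of_hammingDist_eq_two : ∀ {x y : List Bool}, x.length = y.length →
    x.count true = y.count true → hammingDist x y = 2 →
      0 < |(vtSum x : ℤ) - vtSum y| ∧ |(vtSum x : ℤ) - vtSum y| < x.length
  | a :: x, b :: y, hl, hw, hd => by
    simp only [List.length_cons, Nat.add_right_cancel_iff] at hl
    simp only [hammingDist_cons_cons] at hd
    have hD : (vtSum (a :: x) : ℤ) - vtSum (b :: y) = (vtSum x : ℤ) - vtSum y := by
      simp only [vtSum_cons, hw]; push_cast; ring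
    rw [hD, List.length_cons, Nat.cast_succ]
    by_cases hab : a = b
    · subst hab
      have hw' : x.count true = y.count true := by simpa [List.count_cons] using hw
      obtain ⟨hpos, hlt⟩ := vtSum_sub_of_hammingDist_eq_two hl hw' (by simpa using hd)
      exact ⟨hpos, hlt.trans (lt_add_one _)⟩
    · obtain ⟨k, hk, hsign, hsum⟩ :=
        vtSum_sub_of_hammingDist_eq_one hl (by simp [hab] at hd; omega)
      have hk1 : |(vtSum x : ℤ) - vtSum y| = k + 1 := by
        rw [hsum, abs_mul]; rcases hsign with h | h <;> rw [h] <;> simp <;> positivity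
      rw [hk1]
      constructor <;> omega

end VarshamovTenengolts

section Codes

lemma BS_inter_BS_eq_empty_of_mem_BVT {n a : ℕ} {x y : List Bool} (hx : x ∈ BVT n a)
    (hy : y ∈ BVT n a) (hxy : x ≠ y) : BS x ∩ BS y = ∅ := by
  obtain ⟨⟨hxl, hxw⟩, hxa⟩ := hx
  obtain ⟨⟨hyl, hyw⟩, hya⟩ := hy
  have hl : x.length = y.length := hxl.trans hyl.symm
  have hw : x.count true = y.count true := hxw.trans hyw.symm
  by_contra hne
  obtain ⟨z, hzx, hzy⟩ := Set.nonempty_iff_ne_empty.2 hne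
  have hd : hammingDist x y ≤ 2 := by
    refine (hammingDist_triangle hzx.1.symm (hzx.1.trans hl)).trans ?_
    rw [hammingDist_comm z y]
    exact add_le_add hzx.2 hzy.2
  obtain hd0 | hd1 | hd2 : hammingDist x y = 0 ∨ hammingDist x y = 1 ∨ hammingDist x y = 2 := by
    omega
  · exact hxy (eq_of_hammingDist_eq_zero hl hd0)
  · obtain ⟨-, -, hsign, -⟩ := vtSum_sub_of_hammingDist_eq_one hl hd1
    rw [hw] at hsign
    omega
  · obtain ⟨hpos, hlt⟩ := vtSum_sub_of_hammingDist_eq_two hl hw hd2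
    have := (hxa.trans hya.symm).eq_of_abs_lt (by rw [abs_sub_comm]; push_cast; omega)
    rw [this, sub_self, abs_zero] at hpos
    exact hpos.false

lemma reconCode_BVT {n N : ℕ} (a : ℕ) (hN : 0 < N) : reconCode n N BS (BVT n a) :=
  ⟨fun _ hx => hx.1, fun _ hx _ hy hxy => by
    rwa [BS_inter_BS_eq_empty_of_mem_BVT hx hy hxy, Set.ncard_empty]⟩

lemma reconCode_balanced {n N : ℕ} (hN : 3 ≤ N) : reconCode n N BS (balanced n) :=
  ⟨subset_rfl, fun _ hx _ hy hxy => by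
    rcases ncard_BS_inter_BS_eq_zero_or_two (hx.1.trans hy.1.symm) hxy with h | h <;> omega⟩

lemma pairwiseDisjoint_BS_of_reconCode {n N : ℕ} (hN : N ≤ 2) {C : Set (List Bool)}
    (hC : reconCode n N BS C) : C.PairwiseDisjoint BS := by
  intro x hx y hy hxy
  have hlt := hC.2 x hx y hy hxy
  rw [Function.onFun, Set.disjoint_iff_inter_eq_empty, ← Set.ncard_eq_zero
    ((BS_finite x).inter_of_left _)]
  rcases ncard_BS_inter_BS_eq_zero_or_two ((hC.1 hx).1.trans (hC.1 hy).1.symm) hxy with h | h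
    <;> omega

lemma BS_subset_of_mem_balanced {n : ℕ} {x : List Bool} (hx : x ∈ balanced n) :
    BS x ⊆
      wordsOfWeight n (n / 2 - 1) ∪ wordsOfWeight n (n / 2) ∪ wordsOfWeight n (n / 2 + 1) := by
  rintro y ⟨hyl, hd⟩
  obtain hd0 | hd1 : hammingDist x y = 0 ∨ hammingDist x y = 1 := by omega
  · obtain rfl := eq_of_hammingDist_eq_zero hyl.symm hd0
    exact .inl (.inr hx)
  · obtain ⟨-, -, hsign, -⟩ := vtSum_sub_of_hammingDist_eq_one hyl.symm hd1
    have hlen : y.length = n := hyl.trans hx.1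
    have := hx.2
    simp only [Set.mem_union, wordsOfWeight, Set.mem_ofPred_eq, hlen, true_and]
    omega

theorem succ_mul_ncard_le_of_pairwiseDisjoint_BS {n : ℕ} {C : Set (List Bool)}
    (hC : C ⊆ balanced n) (hdisj : C.PairwiseDisjoint BS) :
    (n + 1) * C.ncard ≤ 3 * n.choose (n / 2) := by
  have hCfin : C.Finite := (balanced_finite n).subset hC
  calc (n + 1) * C.ncard = ∑ᶠ c ∈ C, (BS c).ncard := by
        rw [finsum_mem_congr rfl fun c hc => by rw [ncard_BS, (hC hc).1],
          finsum_mem_eq_finite_toFinset_sum _ hCfin, Finset.sum_const, smul_eq_mul,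
          Set.ncard_eq_toFinset_card _ hCfin, mul_comm]
    _ = (⋃ c ∈ C, BS c).ncard := (hCfin.ncard_biUnion (fun c _ => BS_finite c) hdisj).symm
    _ ≤ (wordsOfWeight n (n / 2 - 1) ∪ wordsOfWeight n (n / 2) ∪
          wordsOfWeight n (n / 2 + 1)).ncard :=
        Set.ncard_le_ncard (Set.iUnion₂_subset fun c hc => BS_subset_of_mem_balanced (hC hc))
          (((wordsOfWeight_finite _ _).union (wordsOfWeight_finite _ _)).union
            (wordsOfWeight_finite _ _))
    _ ≤ n.choose (n / 2 - 1) + n.choose (n / 2) + n.choose (n / 2 + 1) := by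
        refine (Set.ncard_union_le _ _).trans (add_le_add ((Set.ncard_union_le _ _).trans ?_) ?_)
        · simp only [ncard_wordsOfWeight, le_refl]
        · rw [ncard_wordsOfWeight]
    _ ≤ 3 * n.choose (n / 2) := by
        have := Nat.choose_le_middle (n / 2 - 1) n
        have := Nat.choose_le_middle (n / 2 + 1) n
        omega

lemma exists_choose_le_mul_ncard_BVT (n : ℕ) :
    ∃ a, n.choose (n / 2) ≤ (n + 1) * (BVT n a).ncard := by
  classical
  obtain ⟨a, ha, hfiber⟩ := Finset.exists_le_card_fiber_of_nsmul_le_card_of_maps_to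
    (s := (balanced_finite n).toFinset) (f := fun x => vtSum x % (n + 1))
    (b := (n.choose (n / 2) : ℚ) / (n + 1))
    (fun x _ => Finset.mem_range.2 (Nat.mod_lt _ n.succ_pos)) ⟨0, by simp⟩ (by
      rw [Finset.card_range, nsmul_eq_mul, ← Set.ncard_eq_toFinset_card _ (balanced_finite n),
        ncard_balanced]
      push_cast
      rw [mul_div_cancel₀ _ (by positivity)])
  have hsub :
      ↑((balanced_finite n).toFinset.filter fun x => vtSum x % (n + 1) = a) ⊆ BVT n a := by
    intro x hx
    simp only [Finset.coe_filter, Set.Finite.mem_toFinset, Set.mem_ofPred_eq] at hx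
    exact ⟨hx.1, by rw [Nat.ModEq, hx.2, Nat.mod_eq_of_lt (Finset.mem_range.1 ha)]⟩
  refine ⟨a, ?_⟩
  have hle := Set.ncard_le_ncard hsub ((balanced_finite n).subset fun x hx => hx.1)
  rw [Set.ncard_coe_finset] at hle
  rw [div_le_iff₀ (by positivity), mul_comm] at hfiber
  have : (n.choose (n / 2) : ℚ) ≤ (n + 1) * (BVT n a).ncard :=
    hfiber.trans (by gcongr)
  exact_mod_cast this

end Codes

section CentralBinom

lemma two_mul_add_one_mul_centralBinom_sq_le (m : ℕ) :
    (2 * m + 1) * m.centralBinom ^ 2 ≤ 16 ^ m := by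
  induction m with
  | zero => simp
  | succ m ih =>
    have h := Nat.succ_mul_centralBinom_succ m
    refine Nat.le_of_mul_le_mul_left ?_ (by positivity : 0 < (m + 1) ^ 2)
    calc (m + 1) ^ 2 * ((2 * (m + 1) + 1) * (m + 1).centralBinom ^ 2)
        = (2 * m + 3) * ((m + 1) * (m + 1).centralBinom) ^ 2 := by ring
      _ = (4 * (2 * m + 3) * (2 * m + 1)) * ((2 * m + 1) * m.centralBinom ^ 2) := by
          rw [h]; ring
      _ ≤ (16 * (m + 1) ^ 2) * 16 ^ m := Nat.mul_le_mul (by nlinarith) ih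
      _ = (m + 1) ^ 2 * 16 ^ (m + 1) := by ring

lemma sixteen_pow_le_four_mul_mul_centralBinom_sq {m : ℕ} (hm : 0 < m) :
    16 ^ m ≤ 4 * m * m.centralBinom ^ 2 := by
  induction m with
  | zero => omega
  | succ m ih =>
    rcases Nat.eq_zero_or_pos m with rfl | hm
    · simp [Nat.centralBinom]
    have h := Nat.succ_mul_centralBinom_succ m
    refine Nat.le_of_mul_le_mul_left ?_ (by positivity : 0 < (m + 1) ^ 2)
    calc (m + 1) ^ 2 * 16 ^ (m + 1) = 16 * (m + 1) ^ 2 * 16 ^ m := by ring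
      _ ≤ 16 * (m + 1) ^ 2 * (4 * m * m.centralBinom ^ 2) := by gcongr; exact ih hm
      _ = (4 * m * (m + 1)) * (16 * (m + 1) * m.centralBinom ^ 2) := by ring
      _ ≤ (2 * m + 1) ^ 2 * (16 * (m + 1) * m.centralBinom ^ 2) := by gcongr; nlinarith
      _ = 4 * (m + 1) * (2 * (2 * m + 1) * m.centralBinom) ^ 2 := by ring
      _ = (m + 1) ^ 2 * (4 * (m + 1) * (m + 1).centralBinom ^ 2) := by rw [← h]; ring

lemma choose_half_eq_centralBinom {n : ℕ} (hn : Even n) :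
    n.choose (n / 2) = (n / 2).centralBinom := by
  obtain ⟨m, rfl⟩ := hn
  rw [Nat.centralBinom_eq_two_mul_choose]
  congr 1
  omega

end CentralBinom

section Redundancy

variable {n N : ℕ} {B : List Bool → Set (List Bool)}

lemma sub_logb_choose_le_of_reconCode {C : Set (List Bool)} (hC : reconCode n N B C) :
    (n : ℝ) - Real.logb 2 (n.choose (n / 2)) ≤ n - Real.logb 2 C.ncard := by
  have hle : C.ncard ≤ n.choose (n / 2) :=
    ncard_balanced n ▸ Set.ncard_le_ncard hC.1 (balanced_finite n)
  rcases Nat.eq_zero_or_pos C.ncard with h0 | hpos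
  · rw [h0, Nat.cast_zero, Real.logb_zero, sub_zero]
    have := Real.logb_nonneg one_lt_two (Nat.one_le_cast.2 (Nat.choose_pos (Nat.div_le_self n 2)))
    linarith
  · have := Real.logb_le_logb_of_le one_lt_two (by exact_mod_cast hpos) (Nat.cast_le.2 hle)
    linarith

lemma rho_le {C : Set (List Bool)} (hC : reconCode n N B C) :
    rho n N B ≤ n - Real.logb 2 C.ncard :=
  csInf_le ⟨_, by rintro r ⟨C, hC, rfl⟩; exact sub_logb_choose_le_of_reconCode hC⟩
    ⟨C, hC, rfl⟩

lemma le_rho {b : ℝ}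
    (h : ∀ C, reconCode n N B C → C.Nonempty → b ≤ n - Real.logb 2 C.ncard) :
    b ≤ rho n N B := by
  -- The empty code has the redundancy `n` of a singleton code, as `Real.logb 2 0 = 0`.
  obtain ⟨x, hx⟩ := balanced_nonempty n
  have hx_code : reconCode n N B {x} :=
    ⟨Set.singleton_subset_iff.2 hx, by simp +contextual⟩
  refine le_csInf ⟨_, _, hx_code, rfl⟩ ?_
  rintro r ⟨C, hC, rfl⟩
  rcases C.eq_empty_or_nonempty with rfl | hne
  · simpa using h _ hx_code (Set.singleton_nonempty x)
  · exact h C hC hne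

end Redundancy

lemma logb_four_pow (m : ℕ) : Real.logb 2 (4 ^ m) = 2 * m := by
  rw [show (4 : ℝ) ^ m = 2 ^ (2 * m) by rw [pow_mul]; norm_num, Real.logb_pow,
    Real.logb_self_eq_one one_lt_two]
  push_cast; ring

lemma logb_cube_mul_sq {x y : ℝ} (hx : 0 < x) (hy : 0 < y) :
    Real.logb 2 (x ^ 3 * y ^ 2) = 3 * Real.logb 2 x + 2 * Real.logb 2 y := by
  rw [Real.logb_mul (by positivity) (by positivity), Real.logb_pow, Real.logb_pow]
  push_cast; ring

lemma cube_mul_ncard_sq_le_of_reconCode {n N : ℕ} (he : Even n) (hN : N ≤ 2)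
    {C : Set (List Bool)} (hC : reconCode n N BS C) :
    (n + 1) ^ 3 * C.ncard ^ 2 ≤ 9 * 4 ^ n := by
  have hpack :=
    succ_mul_ncard_le_of_pairwiseDisjoint_BS hC.1 (pairwiseDisjoint_BS_of_reconCode hN hC)
  obtain ⟨m, rfl⟩ := he
  rw [choose_half_eq_centralBinom ⟨m, rfl⟩, show (m + m) / 2 = m by omega] at hpack
  calc (m + m + 1) ^ 3 * C.ncard ^ 2 = (m + m + 1) * ((m + m + 1) * C.ncard) ^ 2 := by ring
    _ ≤ (m + m + 1) * (3 * m.centralBinom) ^ 2 := by gcongr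
    _ = 9 * ((2 * m + 1) * m.centralBinom ^ 2) := by ring
    _ ≤ 9 * 16 ^ m := by gcongr; exact two_mul_add_one_mul_centralBinom_sq_le m
    _ = 9 * 4 ^ (m + m) := by rw [← two_mul, pow_mul]; norm_num

lemma four_pow_le_mul_choose_sq {n : ℕ} (he : Even n) (hn : 0 < n) :
    4 ^ n ≤ 2 * n * n.choose (n / 2) ^ 2 := by
  obtain ⟨m, rfl⟩ := he
  rw [choose_half_eq_centralBinom ⟨m, rfl⟩, show (m + m) / 2 = m by omega]
  calc 4 ^ (m + m) = 16 ^ m := by rw [← two_mul, pow_mul]; norm_num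
    _ ≤ 4 * m * m.centralBinom ^ 2 := sixteen_pow_le_four_mul_mul_centralBinom_sq (by omega)
    _ = 2 * (m + m) * m.centralBinom ^ 2 := by ring

theorem le_rho_BS {n N : ℕ} (he : Even n) (hn : 0 < n) (hN : N ≤ 2) :
    3 / 2 * Real.logb 2 n - 2 ≤ rho n N BS := by
  refine le_rho fun C hC hne => ?_
  have hA : 0 < C.ncard := (Set.ncard_pos ((balanced_finite n).subset hC.1)).2 hne
  have hbound : n ^ 3 * C.ncard ^ 2 ≤ 4 ^ (n + 2) :=
    calc n ^ 3 * C.ncard ^ 2 ≤ (n + 1) ^ 3 * C.ncard ^ 2 := by gcongr; omega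
      _ ≤ 9 * 4 ^ n := cube_mul_ncard_sq_le_of_reconCode he hN hC
      _ ≤ 4 ^ (n + 2) := by rw [pow_add]; omega
  have hlog := Real.logb_le_logb_of_le one_lt_two (by positivity)
    (show (n : ℝ) ^ 3 * C.ncard ^ 2 ≤ 4 ^ (n + 2) by exact_mod_cast hbound)
  rw [logb_cube_mul_sq (by positivity) (by positivity), logb_four_pow] at hlog
  push_cast at hlog
  linarith

theorem rho_BS_le {n N : ℕ} (he : Even n) (hn : 0 < n) (hN : 0 < N) :
    rho n N BS ≤ 3 / 2 * Real.logb 2 n + 3 / 2 := by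
  obtain ⟨a, ha⟩ := exists_choose_le_mul_ncard_BVT n
  have hA : 0 < (BVT n a).ncard :=
    Nat.pos_of_mul_pos_left ((Nat.choose_pos (Nat.div_le_self n 2)).trans_le ha)
  have hbound : 4 ^ n ≤ (2 * n) ^ 3 * (BVT n a).ncard ^ 2 :=
    calc 4 ^ n ≤ 2 * n * n.choose (n / 2) ^ 2 := four_pow_le_mul_choose_sq he hn
      _ ≤ 2 * n * ((n + 1) * (BVT n a).ncard) ^ 2 := by gcongr
      _ ≤ 2 * n * ((2 * n) * (BVT n a).ncard) ^ 2 := by gcongr; omega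
      _ = (2 * n) ^ 3 * (BVT n a).ncard ^ 2 := by ring
  have hlog := Real.logb_le_logb_of_le one_lt_two (by positivity)
    (show (4 : ℝ) ^ n ≤ (2 * n) ^ 3 * (BVT n a).ncard ^ 2 by exact_mod_cast hbound)
  rw [logb_cube_mul_sq (by positivity) (by positivity), logb_four_pow,
    Real.logb_mul two_ne_zero (by positivity), Real.logb_self_eq_one one_lt_two] at hlog
  linarith [rho_le (reconCode_BVT (n := n) a hN)]

theorem rho_BS_eq_of_three_le {n N : ℕ} (hN : 3 ≤ N) :
    rho n N BS = n - Real.logb 2 (n.choose (n / 2)) :=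
  le_antisymm (by simpa [ncard_balanced] using rho_le (reconCode_balanced (n := n) hN))
    (le_rho fun _ hC _ => sub_logb_choose_le_of_reconCode hC)

/-- Theorem (substitution channel): asymptotic optimal redundancy for `B^S`. -/
theorem stmt0 :
    (∃ c1 c2 : ℝ, ∃ n0 : ℕ, Even n0 ∧ ∀ n : ℕ, Even n → n0 ≤ n →
      ∀ N : ℕ, N = 1 ∨ N = 2 →
        (3 / 2) * Real.logb 2 (n : ℝ) + c1 ≤ rho n N BS ∧
        rho n N BS ≤ (3 / 2) * Real.logb 2 (n : ℝ) + c2) ∧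
    (∀ N : ℕ, 3 ≤ N → ∀ n : ℕ, Even n → 2 ≤ n →
      rho n N BS = ((n : ℝ) - Real.logb 2 ((n.choose (n / 2) : ℕ) : ℝ))) := by
  refine ⟨⟨-2, 3 / 2, 2, even_two, fun n he hn N hN => ⟨?_, ?_⟩⟩,
    fun N hN n _ _ => rho_BS_eq_of_three_le hN⟩
  · linarith [le_rho_BS he (by omega) (show N ≤ 2 by omega)]
  · exact rho_BS_le he (by omega) (by omega)

end BRC
end

section
/- Let n ≥ 2 be even. For each integer i with 2 ≤ i ≤ n, the number of words in U_n with exactly i runs equals 2·C(n/2 − 1, ⌈i/2⌉ − 1)·C(n/2 − 1, ⌊i/2⌋ − 1). Furthermore, for each integer i with 2 ≤ i ≤ n−1, the number of words in V_{n−1} with exactly i runs equals 2·[ C(n/2 − 1, ⌈i/2⌉ − 1)·C(n/2 − 2, ⌊i/2⌋ − 1) + C(n/2 − 1, ⌊i/2⌋ − 1)·C(n/2 − 2, ⌈i/2⌉ − 1) ]. -/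
theorem CompositionAsSet.card_compositionAsSetEquiv_add_one {n : ℕ} (hn : 0 < n)
    (c : CompositionAsSet n) : (compositionAsSetEquiv n c).card + 1 = c.length := by
  let e : Fin (n - 1) ↪ Fin (n + 1) := ⟨fun i => ⟨1 + i, by omega⟩, fun i j h => by
    simpa [Fin.ext_iff] using h⟩
  have he : ∀ i, (e i : ℕ) = 1 + i := fun _ => rfl
  have hsplit : c.boundaries =
      insert 0 (insert (Fin.last n) ((compositionAsSetEquiv n c).map e)) := by
    ext ⟨j, hj⟩
    simp only [Finset.mem_insert, Finset.mem_map, Fin.ext_iff, he, Fin.val_zero, Fin.val_last]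
    constructor
    · intro h
      by_cases h0 : j = 0
      · exact Or.inl h0
      by_cases hl : j = n
      · exact Or.inr (Or.inl hl)
      refine Or.inr (Or.inr ⟨⟨j - 1, by omega⟩, ?_, by simp; omega⟩)
      simp only [compositionAsSetEquiv, Equiv.coe_fn_mk, Set.mem_toFinset, Set.mem_ofPred_eq]
      convert h using 3
      omega
    · rintro (h | h | ⟨i, hi, h⟩)
      · convert c.zero_mem; simp [h]
      · convert c.getLast_mem; simp [h]
      · simp only [compositionAsSetEquiv, Equiv.coe_fn_mk, Set.mem_toFinset] at hi
        convert hi using 2; simp [h]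
  have h0 : (0 : Fin (n + 1)) ∉ insert (Fin.last n) ((compositionAsSetEquiv n c).map e) := by
    simp only [Finset.mem_insert, Finset.mem_map, Fin.ext_iff, he, Fin.val_zero, Fin.val_last]
    omega
  have hl : Fin.last n ∉ (compositionAsSetEquiv n c).map e := by
    simp only [Finset.mem_map, Fin.ext_iff, he, Fin.val_last]
    omega
  rw [CompositionAsSet.length, hsplit, Finset.card_insert_of_notMem h0,
    Finset.card_insert_of_notMem hl, Finset.card_map]
  rfl

theorem Composition.card_length_eq_add_one {n : ℕ} (hn : 0 < n) (k : ℕ) :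
    Fintype.card {c : Composition n // c.length = k + 1} = (n - 1).choose k := by
  let e : {c : Composition n // c.length = k + 1} ≃ {s : Finset (Fin (n - 1)) // s.card = k} :=
    ((compositionEquiv n).subtypeEquiv (q := fun c => c.length = k + 1) fun c => by
        simp [compositionEquiv]).trans
      ((compositionAsSetEquiv n).subtypeEquiv fun c => by
        have := c.card_compositionAsSetEquiv_add_one hn
        omega)
  rw [Fintype.card_congr e, Fintype.card_finset_len, Fintype.card_fin]

def compositionsOfLength (n k : ℕ) : Set (List ℕ) :=
  {l | l.length = k ∧ l.sum = n ∧ ∀ a ∈ l, 0 < a}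

theorem ncard_compositionsOfLength {n : ℕ} (hn : 0 < n) (k : ℕ) :
    (compositionsOfLength n (k + 1)).ncard = (n - 1).choose k := by
  rw [← Nat.card_coe_set_eq, ← Composition.card_length_eq_add_one hn,
    ← Nat.card_eq_fintype_card]
  exact Nat.card_congr
    { toFun := fun l => ⟨⟨l.1, l.2.2.2 _, l.2.2.1⟩, l.2.1⟩
      invFun := fun c => ⟨c.1.blocks, c.2, c.1.blocks_sum, fun _ => c.1.blocks_pos⟩
      left_inv := fun _ => rfl
      right_inv := fun _ => rfl }

namespace List

variable {α : Type*}

theorem forall_mem_interleave {p : α → Prop} {l₁ l₂ : List α} :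
    (∀ a ∈ l₁.interleave l₂, p a) ↔ (∀ a ∈ l₁, p a) ∧ ∀ a ∈ l₂, p a := by
  simp only [interleave_perm_append.mem_iff, mem_append, or_imp, forall_and]

theorem exists_interleave_eq (l : List α) :
    ∃ l₁ l₂ : List α, (l₁.length = l₂.length ∨ l₁.length = l₂.length + 1) ∧
      l₁.interleave l₂ = l := by
  induction l with
  | nil => exact ⟨[], [], by simp⟩
  | cons a l ih =>
    obtain ⟨l₁, l₂, hlen, rfl⟩ := ih
    exact ⟨a :: l₂, l₁, by simp; omega, by simp⟩

theorem interleave_inj : ∀ {l₁ l₂ l₃ l₄ : List α},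
    (l₁.length = l₂.length ∨ l₁.length = l₂.length + 1) →
    (l₃.length = l₄.length ∨ l₃.length = l₄.length + 1) →
    l₁.interleave l₂ = l₃.interleave l₄ → l₁ = l₃ ∧ l₂ = l₄
  | [], l₂, [], l₄, h₁, h₃, h => by simp_all
  | [], l₂, _ :: _, l₄, h₁, h₃, h => by
    have := congrArg length h; simp at this h₁; omega
  | _ :: _, l₂, [], l₄, h₁, h₃, h => by
    have := congrArg length h; simp at this h₃; omega
  | a :: l₁, l₂, b :: l₃, l₄, h₁, h₃, h => by
    simp only [cons_interleave, cons.injEq] at h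
    have := interleave_inj (l₁ := l₂) (l₃ := l₄) (by simp at h₁; omega) (by simp at h₃; omega)
      h.2
    simp [h.1, this]
termination_by l₁ l₂ => l₁.length + l₂.length

theorem replicate_append_inj {a c : ℕ} {b : α} {u v : List α}
    (hu : u.head? ≠ some b) (hv : v.head? ≠ some b)
    (h : replicate a b ++ u = replicate c b ++ v) : a = c ∧ u = v := by
  induction a generalizing c with
  | zero => cases c <;> simp_all [replicate_succ]
  | succ a ih =>
    cases c with
    | zero =>
      simp only [replicate_succ, replicate_zero, cons_append, nil_append] at h
      simp [← h] at hv
    | succ c => simpa [replicate_succ] using ih (by simpa [replicate_succ] using h)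

end List

namespace BRC

def ofRunLengths : Bool → List ℕ → List Bool
  | _, [] => []
  | b, a :: l => List.replicate a b ++ ofRunLengths (!b) l

@[simp] theorem ofRunLengths_nil (b : Bool) : ofRunLengths b [] = [] := rfl

@[simp] theorem ofRunLengths_cons (b : Bool) (a : ℕ) (l : List ℕ) :
    ofRunLengths b (a :: l) = List.replicate a b ++ ofRunLengths (!b) l := rfl

theorem ofRunLengths_succ_cons (b : Bool) (a : ℕ) (l : List ℕ) :
    ofRunLengths b ((a + 1) :: l) = b :: ofRunLengths b (a :: l) := rfl

@[simp] theorem length_ofRunLengths (b : Bool) (l : List ℕ) :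
    (ofRunLengths b l).length = l.sum := by
  induction l generalizing b <;> simp [*]

theorem head?_ofRunLengths_ne {b : Bool} {l : List ℕ} (hl : ∀ a ∈ l, 0 < a) :
    (ofRunLengths (!b) l).head? ≠ some b := by
  cases l with
  | nil => simp
  | cons a l =>
    obtain ⟨k, rfl⟩ := Nat.exists_eq_add_one.mpr (hl a (by simp))
    rw [ofRunLengths_succ_cons]
    simp

theorem count_ofRunLengths_interleave (b : Bool) {l₁ l₂ : List ℕ}
    (h : l₁.length = l₂.length ∨ l₁.length = l₂.length + 1) :
    (ofRunLengths b (l₁.interleave l₂)).count b = l₁.sum := by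
  induction l₁, l₂ using List.interleave.induct generalizing b with
  | case1 l₂ =>
    obtain rfl : l₂ = [] := List.eq_nil_of_length_eq_zero (by simp at h; omega)
    simp
  | case2 a l₁ l₂ ih =>
    -- the tail starts with `!b`, so its `b`-count is its length minus its `!b`-count
    have hrest := ih (!b) (by simp at h; omega)
    have htotal := List.count_not_add_count (ofRunLengths (!b) (l₂.interleave l₁)) b
    simp only [List.cons_interleave, ofRunLengths_cons, List.count_append,
      List.count_replicate_self, List.sum_cons]
    simp only [length_ofRunLengths, List.interleave_perm_append.sum_eq, List.sum_append] at htotal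
    omega

theorem numRuns_cons_cons (a b : Bool) (l : List Bool) :
    numRuns (a :: b :: l) = numRuns (b :: l) + if a = b then 0 else 1 := by
  by_cases hab : a = b
  · subst hab; simp [numRuns, List.destutter_cons']
  · simp [numRuns, List.destutter_cons', hab]

theorem numRuns_cons_replicate_append (b : Bool) (k : ℕ) (l : List Bool) :
    numRuns (b :: (List.replicate k b ++ l)) = numRuns (b :: l) := by
  induction k with
  | zero => rfl
  | succ k ih =>
    rw [List.replicate_succ, List.cons_append, numRuns_cons_cons, ih, if_pos rfl, Nat.add_zero]

theorem numRuns_cons_ofRunLengths_not (b : Bool) {l : List ℕ} (hl : ∀ a ∈ l, 0 < a) :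
    numRuns (b :: ofRunLengths (!b) l) = l.length + 1 := by
  induction l generalizing b with
  | nil => rfl
  | cons a l ih =>
    obtain ⟨k, rfl⟩ := Nat.exists_eq_add_one.mpr (hl a (by simp))
    rw [ofRunLengths_succ_cons, ofRunLengths_cons, numRuns_cons_cons,
      numRuns_cons_replicate_append, ih (!b) fun a ha => hl a (by simp [ha])]
    simp

theorem numRuns_ofRunLengths (b : Bool) {l : List ℕ} (hl : ∀ a ∈ l, 0 < a) :
    numRuns (ofRunLengths b l) = l.length := by
  cases l with
  | nil => rfl
  | cons a l =>
    obtain ⟨k, rfl⟩ := Nat.exists_eq_add_one.mpr (hl a (by simp))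
    rw [ofRunLengths_succ_cons, ofRunLengths_cons, numRuns_cons_replicate_append,
      numRuns_cons_ofRunLengths_not b fun x hx => hl x (by simp [hx]), List.length_cons]

theorem ofRunLengths_inj {b : Bool} {l m : List ℕ} (hl : ∀ a ∈ l, 0 < a)
    (hm : ∀ a ∈ m, 0 < a) (h : ofRunLengths b l = ofRunLengths b m) : l = m := by
  have sum_pos : ∀ a (l : List ℕ), (∀ x ∈ a :: l, 0 < x) → 0 < (a :: l).sum :=
    fun a l hl => (hl a (by simp)).trans_le (by simp)
  induction l generalizing b m with
  | nil =>
    cases m with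
    | nil => rfl
    | cons c m =>
      have hlen := congrArg List.length h
      simp only [length_ofRunLengths, List.sum_nil] at hlen
      exact absurd hlen (sum_pos c m hm).ne
  | cons a l ih =>
    cases m with
    | nil =>
      have hlen := congrArg List.length h
      simp only [length_ofRunLengths, List.sum_nil] at hlen
      exact absurd hlen (sum_pos a l hl).ne'
    | cons c m =>
      have hl' : ∀ x ∈ l, 0 < x := fun x hx => hl x (by simp [hx])
      have hm' : ∀ x ∈ m, 0 < x := fun x hx => hm x (by simp [hx])
      obtain ⟨rfl, hrest⟩ := List.replicate_append_inj (head?_ofRunLengths_ne hl')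
        (head?_ofRunLengths_ne hm') h
      rw [ih hl' hm' hrest]

theorem exists_ofRunLengths_eq_cons (b : Bool) (t : List Bool) :
    ∃ l : List ℕ, (∀ a ∈ l, 0 < a) ∧ ofRunLengths b l = b :: t := by
  induction t generalizing b with
  | nil => exact ⟨[1], by simp, rfl⟩
  | cons c t ih =>
    obtain ⟨l, hl, hlt⟩ := ih c
    by_cases hcb : c = b
    · subst hcb
      obtain ⟨a, l', rfl⟩ : ∃ a l', l = a :: l' :=
        List.exists_cons_of_ne_nil (by rintro rfl; simp at hlt)
      refine ⟨(a + 1) :: l', ?_, by rw [ofRunLengths_succ_cons, hlt]⟩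
      simp only [List.forall_mem_cons] at hl ⊢
      exact ⟨a.succ_pos, hl.2⟩
    · obtain rfl : c = !b := by cases b <;> cases c <;> simp_all
      exact ⟨1 :: l, by simpa using hl, by simp [hlt]⟩

def wordsWithRuns (n w i : ℕ) : Set (List Bool) :=
  {x | x.length = n ∧ x.count true = w ∧ numRuns x = i}

theorem finite_wordsWithRuns (n w i : ℕ) : (wordsWithRuns n w i).Finite :=
  (List.finite_length_eq Bool n).subset fun _ hx => hx.1

def wordsWithRunsHead (b : Bool) (n w i : ℕ) : Set (List Bool) :=
  {x | x.length = n ∧ x.count b = w ∧ numRuns x = i ∧ x.head? = some b}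

theorem wordsWithRunsHead_eq_image (b : Bool) {n w i : ℕ} (hw : w ≤ n) (hi : 0 < i) :
    wordsWithRunsHead b n w i =
      (fun p : List ℕ × List ℕ => ofRunLengths b (p.1.interleave p.2)) ''
        (compositionsOfLength w ((i + 1) / 2) ×ˢ compositionsOfLength (n - w) (i / 2)) := by
  ext x
  simp only [wordsWithRunsHead, compositionsOfLength, Set.mem_ofPred_eq, Set.mem_image,
    Set.mem_prod, Prod.exists]
  constructor
  · rintro ⟨hlen, hcount, hruns, hhead⟩
    obtain ⟨t, rfl⟩ := List.head?_eq_some_iff.mp hhead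
    obtain ⟨l, hl, hlt⟩ := exists_ofRunLengths_eq_cons b t
    obtain ⟨A, B, hAB, rfl⟩ := l.exists_interleave_eq
    rw [List.forall_mem_interleave] at hl
    rw [← hlt] at hlen hcount hruns
    rw [numRuns_ofRunLengths b (List.forall_mem_interleave.mpr hl),
      List.length_interleave] at hruns
    rw [count_ofRunLengths_interleave b hAB] at hcount
    rw [length_ofRunLengths, List.interleave_perm_append.sum_eq, List.sum_append] at hlen
    exact ⟨A, B, ⟨⟨by omega, hcount, hl.1⟩, ⟨by omega, by omega, hl.2⟩⟩, hlt⟩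
  · rintro ⟨A, B, ⟨⟨hA₁, hA₂, hA₃⟩, ⟨hB₁, hB₂, hB₃⟩⟩, rfl⟩
    have hAB : A.length = B.length ∨ A.length = B.length + 1 := by omega
    refine ⟨?_, count_ofRunLengths_interleave b hAB ▸ hA₂, ?_, ?_⟩
    · rw [length_ofRunLengths, List.interleave_perm_append.sum_eq, List.sum_append]
      omega
    · rw [numRuns_ofRunLengths b (List.forall_mem_interleave.mpr ⟨hA₃, hB₃⟩),
        List.length_interleave]
      omega
    · obtain ⟨a, A, rfl⟩ := List.exists_cons_of_length_eq_add_one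
        (by omega : A.length = (i + 1) / 2 - 1 + 1)
      obtain ⟨k, rfl⟩ := Nat.exists_eq_add_one.mpr (hA₃ a (by simp))
      rw [List.cons_interleave, ofRunLengths_succ_cons]
      rfl

theorem ncard_wordsWithRunsHead (b : Bool) {n w i : ℕ} (hw : w ≤ n) (hi : 0 < i) :
    (wordsWithRunsHead b n w i).ncard =
      (compositionsOfLength w ((i + 1) / 2)).ncard *
        (compositionsOfLength (n - w) (i / 2)).ncard := by
  rw [wordsWithRunsHead_eq_image b hw hi, Set.InjOn.ncard_image, Set.ncard_prod]
  rintro ⟨A, B⟩ ⟨⟨hA₁, -, hA₃⟩, ⟨hB₁, -, hB₃⟩⟩ ⟨A', B'⟩ ⟨⟨hA₁', -, hA₃'⟩, ⟨hB₁', -, hB₃'⟩⟩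
    h
  have hI := ofRunLengths_inj (List.forall_mem_interleave.mpr ⟨hA₃, hB₃⟩)
    (List.forall_mem_interleave.mpr ⟨hA₃', hB₃'⟩) h
  obtain ⟨rfl, rfl⟩ := List.interleave_inj (by omega) (by omega) hI
  rfl

theorem wordsWithRuns_eq_union {n w i : ℕ} (hwn : w ≤ n) (hi : 0 < i) :
    wordsWithRuns n w i = wordsWithRunsHead true n w i ∪ wordsWithRunsHead false n (n - w) i := by
  ext x
  simp only [wordsWithRuns, wordsWithRunsHead, Set.mem_union, Set.mem_ofPred_eq]
  have htotal := List.count_true_add_count_false x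
  constructor
  · rintro ⟨hlen, hcount, hruns⟩
    obtain _ | ⟨_ | _, t⟩ := x
    · simp [numRuns] at hruns; omega
    · exact Or.inr ⟨hlen, by omega, hruns, rfl⟩
    · exact Or.inl ⟨hlen, hcount, hruns, rfl⟩
  · rintro (⟨hlen, hcount, hruns, -⟩ | ⟨hlen, hcount, hruns, -⟩)
    · exact ⟨hlen, hcount, hruns⟩
    · exact ⟨hlen, by omega, hruns⟩

theorem ncard_wordsWithRuns {n w i : ℕ} (hw : 0 < w) (hwn : w < n) (hi : 2 ≤ i) :
    (wordsWithRuns n w i).ncard =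
      (w - 1).choose ((i + 1) / 2 - 1) * (n - w - 1).choose (i / 2 - 1) +
        (w - 1).choose (i / 2 - 1) * (n - w - 1).choose ((i + 1) / 2 - 1) := by
  have hdisj : Disjoint (wordsWithRunsHead true n w i) (wordsWithRunsHead false n (n - w) i) :=
    Set.disjoint_left.mpr fun x hx hx' => by simp [wordsWithRunsHead, hx.2.2.2] at hx'
  have hfin (b : Bool) (m : ℕ) : (wordsWithRunsHead b n m i).Finite :=
    (List.finite_length_eq Bool n).subset fun _ hx => hx.1
  obtain ⟨k₁, hk₁⟩ : ∃ k, (i + 1) / 2 = k + 1 := ⟨_, (Nat.succ_pred_eq_of_pos (by omega)).symm⟩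
  obtain ⟨k₂, hk₂⟩ : ∃ k, i / 2 = k + 1 := ⟨_, (Nat.succ_pred_eq_of_pos (by omega)).symm⟩
  rw [wordsWithRuns_eq_union hwn.le (by omega), Set.ncard_union_eq hdisj (hfin _ _) (hfin _ _),
    ncard_wordsWithRunsHead true hwn.le (by omega), ncard_wordsWithRunsHead false (n.sub_le w)
    (by omega), Nat.sub_sub_self hwn.le, hk₁, hk₂, ncard_compositionsOfLength hw,
    ncard_compositionsOfLength hw, ncard_compositionsOfLength (Nat.sub_pos_of_lt hwn),
    ncard_compositionsOfLength (Nat.sub_pos_of_lt hwn)]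
  simp only [Nat.add_sub_cancel]
  ring

theorem stmt17_general (n : ℕ) (hn : Even n) :
    (∀ i : ℕ, 2 ≤ i → i ≤ n →
      {x ∈ balanced n | numRuns x = i}.ncard =
        2 * (n / 2 - 1).choose ((i + 1) / 2 - 1) * (n / 2 - 1).choose (i / 2 - 1)) ∧
    (∀ i : ℕ, 2 ≤ i → i ≤ n - 1 →
      {x ∈ Vset n | numRuns x = i}.ncard =
        2 * ((n / 2 - 1).choose ((i + 1) / 2 - 1) * (n / 2 - 2).choose (i / 2 - 1) +
             (n / 2 - 1).choose (i / 2 - 1) * (n / 2 - 2).choose ((i + 1) / 2 - 1))) := by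
  obtain ⟨r, rfl⟩ := hn
  have hr : (r + r) / 2 = r := by omega
  refine ⟨fun i hi hin => ?_, fun i hi hin => ?_⟩
  · have hU : {x ∈ balanced (r + r) | numRuns x = i} = wordsWithRuns (r + r) r i := by
      ext x
      simp only [balanced, wordsWithRuns, hr, Set.mem_ofPred_eq, and_assoc]
    rw [hU, ncard_wordsWithRuns (by omega) (by omega) hi, hr, show r + r - r - 1 = r - 1 by omega]
    ring
  · have hV : {x ∈ Vset (r + r) | numRuns x = i} =
        wordsWithRuns (r + r - 1) r i ∪ wordsWithRuns (r + r - 1) (r - 1) i := by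
      ext x
      simp only [Vset, wordsWithRuns, hr, Set.mem_ofPred_eq, Set.mem_union]
      tauto
    have hdisj : Disjoint (wordsWithRuns (r + r - 1) r i) (wordsWithRuns (r + r - 1) (r - 1) i) :=
      Set.disjoint_left.mpr fun x hx hx' => by have := hx.2.1 ▸ hx'.2.1; omega
    rw [hV, Set.ncard_union_eq hdisj (finite_wordsWithRuns _ _ _) (finite_wordsWithRuns _ _ _),
      ncard_wordsWithRuns (by omega) (by omega) hi, ncard_wordsWithRuns (by omega) (by omega) hi,
      hr,
      show r + r - 1 - r - 1 = r - 2 by omega, show r + r - 1 - (r - 1) - 1 = r - 1 by omega,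
      show r - 1 - 1 = r - 2 by omega]
    ring

/-- Lemma: counting words in `U_n` and `V_{n-1}` with exactly `i` runs. -/
theorem stmt17 (n : ℕ) (hn : Even n) (h2 : 2 ≤ n) :
    (∀ i : ℕ, 2 ≤ i → i ≤ n →
      {x ∈ balanced n | numRuns x = i}.ncard =
        2 * (n / 2 - 1).choose ((i + 1) / 2 - 1) * (n / 2 - 1).choose (i / 2 - 1)) ∧
    (∀ i : ℕ, 2 ≤ i → i ≤ n - 1 →
      {x ∈ Vset n | numRuns x = i}.ncard =
        2 * ((n / 2 - 1).choose ((i + 1) / 2 - 1) * (n / 2 - 2).choose (i / 2 - 1) +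
             (n / 2 - 1).choose (i / 2 - 1) * (n / 2 - 2).choose ((i + 1) / 2 - 1))) :=
  stmt17_general n hn

end BRC
end
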